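/- Scaled limit of the fusion penalty difference: let (λ₂(n))_{n∈ℕ} be a sequence of nonnegative reals with λ₂(n)/√n → λ₂⁰ ≥ 0 as n → ∞, and let w_{st} ≥ 0 for 1 ≤ s < t ≤ k. Then for any fixed Θ, U ∈ ℝ^{p×k}, λ₂(n) · Σ_{s<t} w_{st} ( ‖Θ_s − Θ_t + (U_s − U_t)/√n‖₂ − ‖Θ_s − Θ_t‖₂ ) converges as n → ∞ to λ₂⁰ · G(U; Θ). -/

import Mathlib

/-!
For fixed `a = Θ_s - Θ_t` and `u = U_s - U_t`, the quantity
`√n (‖a + u/√n‖ - ‖a‖)` is the difference quotient of `t ↦ ‖a + t u‖` at `0` with step `1/√n`.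
If `a ≠ 0` the norm is differentiable there and the quotient tends to the directional derivative
`⟨a, u⟩ / ‖a‖`; if `a = 0` it equals `‖u‖` for every `n` by homogeneity. Writing
`λ₂(n) = (λ₂(n)/√n) · √n` turns each summand into a product of two convergent sequences.
-/

open Filter Topology

noncomputable def l2norm {p : ℕ} (v : Fin p → ℝ) : ℝ := Real.sqrt (∑ j, v j ^ 2)

lemma l2norm_smul_of_nonneg {p : ℕ} {c : ℝ} (hc : 0 ≤ c) (v : Fin p → ℝ) :
    l2norm (c • v) = c * l2norm v := by
  simp only [l2norm, Pi.smul_apply, smul_eq_mul, mul_pow]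
  rw [← Finset.mul_sum, Real.sqrt_mul (by positivity), Real.sqrt_sq hc]

lemma hasDerivAt_l2norm_add_smul {p : ℕ} {a : Fin p → ℝ} (ha : a ≠ 0) (u : Fin p → ℝ) :
    HasDerivAt (fun t : ℝ => l2norm (a + t • u)) ((∑ j, a j * u j) / l2norm a) 0 := by
  have hsq : HasDerivAt (fun t : ℝ => ∑ j, (a j + t * u j) ^ 2) (∑ j, 2 * a j * u j) 0 := by
    simpa using HasDerivAt.fun_sum (u := Finset.univ) fun j _ =>
      (((hasDerivAt_id (0 : ℝ)).mul_const (u j)).const_add (a j)).fun_pow 2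
  have hne : ∑ j, (a j + 0 * u j) ^ 2 ≠ 0 := by
    simp only [zero_mul, add_zero]
    refine fun h => ha (funext fun j => ?_)
    simpa using (Finset.sum_eq_zero_iff_of_nonneg fun j _ => sq_nonneg (a j)).mp h j
      (Finset.mem_univ j)
  convert hsq.sqrt hne using 1
  · funext t
    simp [l2norm]
  · simp only [zero_mul, add_zero, l2norm, mul_assoc, ← Finset.mul_sum]
    rw [mul_div_mul_left _ _ two_ne_zero]

lemma tendsto_inv_sqrt_natCast_nhdsNE_zero :
    Tendsto (fun n : ℕ => (Real.sqrt n)⁻¹) atTop (𝓝[≠] 0) := by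
  refine tendsto_nhdsWithin_iff.mpr ⟨?_, ?_⟩
  · exact tendsto_inv_atTop_zero.comp (Real.tendsto_sqrt_atTop.comp tendsto_natCast_atTop_atTop)
  · filter_upwards [eventually_ne_atTop 0] with n hn
    simpa using hn

lemma HasDerivAt.tendsto_sqrt_smul_sub {F : Type*} [NormedAddCommGroup F] [NormedSpace ℝ F]
    {f : ℝ → F} {f' : F} (hf : HasDerivAt f f' 0) :
    Tendsto (fun n : ℕ => Real.sqrt n • (f (Real.sqrt n)⁻¹ - f 0)) atTop (𝓝 f') := by
  simpa [Function.comp_def, slope_def_module] using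
    hf.tendsto_slope.comp tendsto_inv_sqrt_natCast_nhdsNE_zero

lemma tendsto_sqrt_mul_l2norm_add_inv_sqrt_smul_sub {p : ℕ} (a u : Fin p → ℝ) :
    Tendsto (fun n : ℕ => Real.sqrt n * (l2norm (a + (Real.sqrt n)⁻¹ • u) - l2norm a)) atTop
      (𝓝 (if a = 0 then l2norm u else (∑ j, a j * u j) / l2norm a)) := by
  split_ifs with ha
  · subst ha
    refine tendsto_const_nhds.congr' ?_
    filter_upwards [eventually_ne_atTop 0] with n hn
    have hsqrt : Real.sqrt n ≠ 0 := by simpa using hn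
    rw [zero_add, l2norm_smul_of_nonneg (by positivity),
      show l2norm (0 : Fin p → ℝ) = 0 by simp [l2norm], sub_zero, mul_inv_cancel_left₀ hsqrt]
  · simpa using (hasDerivAt_l2norm_add_smul ha u).tendsto_sqrt_smul_sub

lemma tendsto_mul_l2norm_add_inv_sqrt_smul_sub {lam : ℕ → ℝ} {lam0 : ℝ}
    (hlam : Tendsto (fun n : ℕ => lam n / Real.sqrt n) atTop (𝓝 lam0)) {p : ℕ}
    (a u : Fin p → ℝ) :
    Tendsto (fun n : ℕ => lam n * (l2norm (a + (Real.sqrt n)⁻¹ • u) - l2norm a)) atTop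
      (𝓝 (lam0 * if a = 0 then l2norm u else (∑ j, a j * u j) / l2norm a)) := by
  refine (hlam.mul (tendsto_sqrt_mul_l2norm_add_inv_sqrt_smul_sub a u)).congr' ?_
  filter_upwards [eventually_ne_atTop 0] with n hn
  have hsqrt : Real.sqrt n ≠ 0 := by simpa using hn
  field_simp

theorem scaled_fusion_penalty_difference_limit_general
    (p k : ℕ) (lam2 : ℕ → ℝ) (lam20 : ℝ)
    (hlim : Filter.Tendsto (fun n : ℕ => lam2 n / Real.sqrt n) atTop (𝓝 lam20))
    (w : Fin k → Fin k → ℝ)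
    (Θ U : Fin k → Fin p → ℝ) :
    Filter.Tendsto
      (fun n : ℕ =>
        lam2 n * ∑ s, ∑ t, (if s < t then
          w s t * (l2norm (Θ s - Θ t + (Real.sqrt n)⁻¹ • (U s - U t))
                    - l2norm (Θ s - Θ t)) else 0))
      atTop
      (𝓝 (lam20 * ∑ s, ∑ t, (if s < t then
        w s t * (if Θ s = Θ t then l2norm (U s - U t)
          else (∑ j, (Θ s j - Θ t j) * (U s j - U t j)) / l2norm (Θ s - Θ t))
        else 0))) := by
  have hterm : ∀ s t : Fin k, Tendsto (fun n : ℕ => lam2 n * (if s < t then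
      w s t * (l2norm (Θ s - Θ t + (Real.sqrt n)⁻¹ • (U s - U t)) - l2norm (Θ s - Θ t)) else 0))
      atTop (𝓝 (lam20 * (if s < t then w s t * (if Θ s = Θ t then l2norm (U s - U t)
        else (∑ j, (Θ s j - Θ t j) * (U s j - U t j)) / l2norm (Θ s - Θ t)) else 0))) := by
    intro s t
    by_cases hst : s < t
    · have h := (tendsto_mul_l2norm_add_inv_sqrt_smul_sub hlim (Θ s - Θ t) (U s - U t)).const_mul
        (w s t)
      simp only [sub_eq_zero, Pi.sub_apply] at h
      simpa only [hst, if_true, mul_left_comm (w s t)] using h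
    · simp [hst]
  simpa only [Finset.mul_sum] using
    tendsto_finsetSum _ fun s _ => tendsto_finsetSum _ fun t _ => hterm s t

/-- if λ₂(n)/√n → λ₂⁰ ≥ 0 and w_{st} ≥ 0, then for fixed Θ, U ∈ ℝ^{p×k},
λ₂(n) · Σ_{s<t} w_{st} ( ‖Θ_s − Θ_t + (U_s − U_t)/√n‖₂ − ‖Θ_s − Θ_t‖₂ ) → λ₂⁰ · G(U; Θ),
where G(U; Θ) = Σ_{s<t} w_{st} [ ⟨Θ_s − Θ_t, U_s − U_t⟩/‖Θ_s − Θ_t‖₂ · 1(Θ_s ≠ Θ_t)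
+ ‖U_s − U_t‖₂ · 1(Θ_s = Θ_t) ]. -/
theorem scaled_fusion_penalty_difference_limit
    (p k : ℕ) (lam2 : ℕ → ℝ) (lam20 : ℝ)
    (hnn : ∀ n, 0 ≤ lam2 n) (hlam20 : 0 ≤ lam20)
    (hlim : Filter.Tendsto (fun n : ℕ => lam2 n / Real.sqrt n) atTop (𝓝 lam20))
    (w : Fin k → Fin k → ℝ) (hw : ∀ s t : Fin k, s < t → 0 ≤ w s t)
    (Θ U : Fin k → Fin p → ℝ) :
    Filter.Tendsto
      (fun n : ℕ =>
        lam2 n * ∑ s, ∑ t, (if s < t then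
          w s t * (l2norm (Θ s - Θ t + (Real.sqrt n)⁻¹ • (U s - U t))
                    - l2norm (Θ s - Θ t)) else 0))
      atTop
      (𝓝 (lam20 * ∑ s, ∑ t, (if s < t then
        w s t * (if Θ s = Θ t then l2norm (U s - U t)
          else (∑ j, (Θ s j - Θ t j) * (U s j - U t j)) / l2norm (Θ s - Θ t))
        else 0))) :=
  scaled_fusion_penalty_difference_limit_general p k lam2 lam20 hlim w Θ U
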